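/- Let p be a positive integer and β > p. For any nonempty open interval J₀ ⊆ [-p, p], there exists a positive integer n₀ such that for all n ≥ n₀, the open interval (-p, p) is contained in U_β^n(J₀). -/

import Mathlib

/-!
Put `t = -β / x`. Then `U_β x = p · {t}₂`, and `x ↦ -β / x` maps an interval `(x₁, x₂)` not
containing `0` onto `(-β / x₁, -β / x₂)`, of length `β (x₂ - x₁) / (x₁ x₂)`. If `0 ∈ [x₁, x₂]`,
or if this `t`-interval is longer than `2`, the image of `(x₁, x₂)` contains `(-p, p]`.
Otherwise `{·}₂` jumps at most once on it, at an odd integer `m`. With no jump the image has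
length at least `(β / p) (x₂ - x₁)`, because `|x₁ x₂| ≤ p²`. With a jump, `|m| ≥ 3`
because `|t| > β / p > 1`, so `|x₁ x₂| ≤ p β / 3` and the longer of the two pieces has length at
least `(3 / 2) (x₂ - x₁)`. So the lengths grow geometrically with ratio `min (3/2) (β/p) > 1`
until some iterate covers `(-p, p)`. From then on every later iterate covers it too, since
`U_β (-p, p) ⊇ (-p, p]`.
-/

/-- The signed fractional part `{t}₂`: the unique element of `(-1, 1]` with `t - {t}₂ ∈ 2ℤ`. -/
noncomputable def fract2 (t : ℝ) : ℝ := t - 2 * ⌈(t - 1) / 2⌉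

/-- The Gauss-type map `U_β(x) = p·{-β/x}₂`, with `U_β(0) = 0`. -/
noncomputable def Ubeta (p β : ℝ) (x : ℝ) : ℝ := if x = 0 then 0 else p * fract2 (-β / x)

open Set Function

section Iterate

variable {α : Type*} {f : α → α} {A : Set α}

theorem subset_iterate_image_of_le (hA : A ⊆ f '' A) {s : Set α} {n m : ℕ}
    (hn : A ⊆ f^[n] '' s) (hnm : n ≤ m) : A ⊆ f^[m] '' s := by
  induction m, hnm using Nat.le_induction with
  | base => exact hn
  | succ m _ ih =>
    rw [iterate_succ', image_comp]
    exact hA.trans (image_mono ih)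

theorem exists_subset_iterate_image_of_expanding {ι : Type*} {I : ι → Set α} {len : ι → ℝ}
    {M c : ℝ} (hc : 1 < c) (hlen : ∀ i, len i ≤ M)
    (hstep : ∀ i, A ⊆ f '' I i ∨ ∃ j, I j ⊆ f '' I i ∧ c * len i ≤ len j)
    (i : ι) (hi : 0 < len i) : ∃ n, 0 < n ∧ A ⊆ f^[n] '' I i := by
  suffices h : ∀ k : ℕ, ∀ i, M < c ^ k * len i → ∃ n, 0 < n ∧ A ⊆ f^[n] '' I i by
    obtain ⟨k, hk⟩ := pow_unbounded_of_one_lt (M / len i) hc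
    exact h k i (by rwa [div_lt_iff₀ hi] at hk)
  intro k
  induction k with
  | zero => exact fun i hi => absurd (hlen i) (by simpa using hi)
  | succ k ih =>
    intro i hi
    rcases hstep i with hcover | ⟨j, hj, hlen_j⟩
    · exact ⟨1, one_pos, by simpa using hcover⟩
    · obtain ⟨n, -, hn⟩ := ih j <| calc
        M < c ^ (k + 1) * len i := hi
        _ = c ^ k * (c * len i) := by ring
        _ ≤ c ^ k * len j := mul_le_mul_of_nonneg_left hlen_j (pow_nonneg (by linarith) k)
      refine ⟨n + 1, n.succ_pos, ?_⟩
      rw [iterate_succ, image_comp]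
      exact hn.trans (image_mono hj)

end Iterate

section Fract2

variable {r s u v : ℝ}

theorem fract2_eq_sub_two_mul (k : ℤ) {t : ℝ} (h₁ : 2 * k - 1 < t) (h₂ : t ≤ 2 * k + 1) :
    fract2 t = t - 2 * k := by
  rw [fract2, show ⌈(t - 1) / 2⌉ = k from Int.ceil_eq_iff.2 ⟨by linarith, by linarith⟩]

theorem fract2_add_two_mul (k : ℤ) {z : ℝ} (h₁ : -1 < z) (h₂ : z ≤ 1) :
    fract2 (z + 2 * k) = z := by
  rw [fract2_eq_sub_two_mul k (by linarith) (by linarith)]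
  ring

theorem Ioo_subset_image_fract2 (k : ℤ) (hu : -1 ≤ u) (hv : v ≤ 1) :
    Ioo u v ⊆ fract2 '' Ioo (u + 2 * k) (v + 2 * k) := fun z hz =>
  ⟨z + 2 * k, ⟨by linarith [hz.1], by linarith [hz.2]⟩,
    fract2_add_two_mul k (by linarith [hz.1]) (by linarith [hz.2])⟩

theorem Ioc_subset_image_fract2 (h : r + 2 < s) : Ioc (-1) 1 ⊆ fract2 '' Ioo r s := by
  rintro z ⟨hz₁, hz₂⟩
  set k : ℤ := ⌊(r - z) / 2⌋ + 1
  have hk₁ : (r - z) / 2 < k := by push_cast [k]; exact Int.lt_floor_add_one _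
  have hk₂ : (k : ℝ) ≤ (r - z) / 2 + 1 := by push_cast [k]; linarith [Int.floor_le ((r - z) / 2)]
  exact ⟨z + 2 * k, ⟨by linarith, by linarith⟩, fract2_add_two_mul k hz₁ hz₂⟩

theorem exists_Ioo_subset_image_fract2 (hrs : r < s) (hs : s ≤ r + 2) :
    ∃ u v, -1 ≤ u ∧ u < v ∧ v ≤ 1 ∧ Ioo u v ⊆ fract2 '' Ioo r s ∧
      (v - u = s - r ∨ ∃ k : ℤ, (2 * k + 1 : ℝ) ∈ Ioo r s ∧ s - r ≤ 2 * (v - u)) := by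
  set k : ℤ := ⌊(r + 1) / 2⌋
  have hk₁ : (k : ℝ) ≤ (r + 1) / 2 := Int.floor_le _
  have hk₂ : (r + 1) / 2 < k + 1 := Int.lt_floor_add_one _
  by_cases hsk : s ≤ 2 * k + 1
  · refine ⟨r - 2 * k, s - 2 * k, by linarith, by linarith, by linarith, ?_, Or.inl (by ring)⟩
    simpa using Ioo_subset_image_fract2 k (u := r - 2 * k) (v := s - 2 * k) (by linarith)
      (by linarith)
  have hodd : (2 * k + 1 : ℝ) ∈ Ioo r s := ⟨by linarith, by linarith⟩
  rcases le_total (s - (2 * k + 1)) (2 * k + 1 - r) with hleft | hright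
  · refine ⟨r - 2 * k, 1, by linarith, by linarith, le_rfl, ?_, Or.inr ⟨k, hodd, by linarith⟩⟩
    exact (Ioo_subset_image_fract2 k (by linarith) le_rfl).trans
      (image_mono (Ioo_subset_Ioo (by linarith) (by linarith)))
  · refine ⟨-1, s - 2 * (k + 1), le_rfl, by linarith, by linarith, ?_,
      Or.inr ⟨k, hodd, by linarith⟩⟩
    exact (Ioo_subset_image_fract2 (k + 1) le_rfl (by linarith)).trans
      (image_mono (Ioo_subset_Ioo (by push_cast; linarith) (by push_cast; linarith)))

end Fract2

section Ubeta

variable {P β r s u v x₁ x₂ : ℝ}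

theorem neg_div_sub_neg_div (h₁ : x₁ ≠ 0) (h₂ : x₂ ≠ 0) :
    -β / x₂ - -β / x₁ = β * (x₂ - x₁) / (x₁ * x₂) := by
  field_simp
  ring

theorem neg_div_lt_neg_div (hβ : 0 < β) (hxy : x₁ < x₂) (hpos : 0 < x₁ * x₂) :
    -β / x₁ < -β / x₂ := by
  have := neg_div_sub_neg_div (β := β) (left_ne_zero_of_mul hpos.ne')
    (right_ne_zero_of_mul hpos.ne')
  have : 0 < β * (x₂ - x₁) / (x₁ * x₂) := div_pos (mul_pos hβ (by linarith)) hpos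
  linarith

theorem mapsTo_neg_div_Ioo (hβ : 0 < β) (h : 0 < r ∨ s < 0) :
    MapsTo (fun t => -β / t) (Ioo r s) (Ioo (-β / r) (-β / s)) := by
  rintro t ⟨hrt, hts⟩
  have hpos : 0 < r * t ∧ 0 < t * s := by
    rcases h with h | h
    · exact ⟨mul_pos h (by linarith), mul_pos (by linarith) (by linarith)⟩
    · exact ⟨mul_pos_of_neg_of_neg (by linarith) (by linarith),
        mul_pos_of_neg_of_neg (by linarith) h⟩
  exact ⟨neg_div_lt_neg_div hβ hrt hpos.1, neg_div_lt_neg_div hβ hts hpos.2⟩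

theorem Ubeta_neg_div (hβ : β ≠ 0) (t : ℝ) : Ubeta P β (-β / t) = P * fract2 t := by
  rcases eq_or_ne t 0 with rfl | ht
  · norm_num [Ubeta, fract2]
  · rw [Ubeta, if_neg (div_ne_zero (neg_ne_zero.2 hβ) ht), div_div_cancel₀ (neg_ne_zero.2 hβ)]

theorem Ioo_mul_subset_image_Ubeta (hP : 0 < P) (hβ : 0 < β) (h : 0 < r ∨ s < 0)
    (hsub : Ioo u v ⊆ fract2 '' Ioo r s) :
    Ioo (P * u) (P * v) ⊆ Ubeta P β '' Ioo (-β / r) (-β / s) := by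
  rw [← image_mul_left_Ioo hP]
  rintro _ ⟨_, hz, rfl⟩
  obtain ⟨t, ht, rfl⟩ := hsub hz
  exact ⟨-β / t, mapsTo_neg_div_Ioo hβ h ht, Ubeta_neg_div hβ.ne' t⟩

theorem Ioc_subset_image_Ubeta (hP : 0 < P) (hβ : 0 < β) (h : 0 < r ∨ s < 0)
    (hrs : r + 2 < s) :
    Ioc (-P) P ⊆ Ubeta P β '' Ioo (-β / r) (-β / s) := by
  intro y ⟨hy₁, hy₂⟩
  have hmem : y / P ∈ Ioc (-1) 1 :=
    ⟨by rwa [lt_div_iff₀ hP, neg_one_mul], by rwa [div_le_one hP]⟩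
  obtain ⟨t, ht, hft⟩ := Ioc_subset_image_fract2 hrs hmem
  refine ⟨-β / t, mapsTo_neg_div_Ioo hβ h ht, ?_⟩
  rw [Ubeta_neg_div hβ.ne', hft]
  field_simp

theorem Ioc_subset_image_Ubeta_of_nonpos_of_nonneg (hP : 0 < P) (hβ : 0 < β) (h₁₂ : x₁ < x₂)
    (h₁ : x₁ ≤ 0) (h₂ : 0 ≤ x₂) : Ioc (-P) P ⊆ Ubeta P β '' Ioo x₁ x₂ := by
  have hinv (x : ℝ) : -β / (-β / x) = x := div_div_cancel₀ (neg_ne_zero.2 hβ.ne')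
  rcases h₂.lt_or_eq with h₂ | rfl
  · have hs : -β / x₂ < 0 := div_neg_of_neg_of_pos (by linarith) h₂
    refine (Ioc_subset_image_Ubeta hP hβ (r := -β / x₂ - 3) (Or.inr hs) (by linarith)).trans
      (image_mono (Ioo_subset_Ioo ?_ (hinv x₂).le))
    exact h₁.trans (div_nonneg_of_nonpos (by linarith) (by linarith))
  · have hr : 0 < -β / x₁ := div_pos_of_neg_of_neg (by linarith) h₁₂
    refine (Ioc_subset_image_Ubeta hP hβ (s := -β / x₁ + 3) (Or.inl hr) (by linarith)).trans
      (image_mono (Ioo_subset_Ioo (hinv x₁).ge ?_))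
    exact (div_neg_of_neg_of_pos (by linarith) (by linarith)).le

end Ubeta

section Expansion

variable {P β x₁ x₂ : ℝ}

theorem three_le_abs_two_mul_add_one {k : ℤ} (h : 1 < |(2 * k + 1 : ℝ)|) :
    3 ≤ |(2 * k + 1 : ℝ)| := by
  have h' : 1 < |2 * k + 1| := by exact_mod_cast h
  have : 3 ≤ |2 * k + 1| := by
    rcases abs_cases (2 * k + 1) with hk | hk <;> rw [hk.1] at h' ⊢ <;> omega
  exact_mod_cast this

theorem div_abs_mul_sub_le (hβ : 0 ≤ β) (hx₁ : -P ≤ x₁) (hx₂ : x₂ ≤ P)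
    (hsign : 0 < x₁ ∨ x₂ < 0) {x : ℝ} (hx : x ∈ Icc x₁ x₂) :
    β / |x| * (x₂ - x₁) ≤ P * (-β / x₂ - -β / x₁) := by
  obtain ⟨hxx₁, hxx₂⟩ := hx
  have hprod : 0 < x₁ * x₂ ∧ 0 < |x| ∧ x₁ * x₂ ≤ P * |x| := by
    rcases hsign with h | h
    · rw [abs_of_pos (h.trans_le hxx₁)]
      exact ⟨by nlinarith, by linarith, by nlinarith⟩
    · rw [abs_of_neg (hxx₂.trans_lt h)]
      exact ⟨by nlinarith, by linarith, by nlinarith⟩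
  obtain ⟨hprod, hx, hle⟩ := hprod
  have hnum : 0 ≤ β * (x₂ - x₁) := mul_nonneg hβ (by linarith)
  rw [neg_div_sub_neg_div (left_ne_zero_of_mul hprod.ne') (right_ne_zero_of_mul hprod.ne'),
    div_mul_eq_mul_div, div_le_iff₀ hx, mul_div_assoc', div_mul_eq_mul_div,
    le_div_iff₀ hprod]
  nlinarith [mul_le_mul_of_nonneg_left hle hnum]

end Expansion

theorem Ioc_subset_image_Ubeta_or_exists_expanded {P β x₁ x₂ : ℝ} (hP : 0 < P) (hPβ : P < β)
    (hx₁ : -P ≤ x₁) (h₁₂ : x₁ < x₂) (hx₂ : x₂ ≤ P) :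
    Ioc (-P) P ⊆ Ubeta P β '' Ioo x₁ x₂ ∨
      ∃ y₁ y₂, -P ≤ y₁ ∧ y₁ < y₂ ∧ y₂ ≤ P ∧ Ioo y₁ y₂ ⊆ Ubeta P β '' Ioo x₁ x₂ ∧
        min (3 / 2) (β / P) * (x₂ - x₁) ≤ y₂ - y₁ := by
  have hβ : 0 < β := hP.trans hPβ
  by_cases h0 : x₁ ≤ 0 ∧ 0 ≤ x₂
  · exact Or.inl (Ioc_subset_image_Ubeta_of_nonpos_of_nonneg hP hβ h₁₂ h0.1 h0.2)
  have hsign : 0 < x₁ ∨ x₂ < 0 := by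
    by_contra! h
    exact h0 h
  have hpos : 0 < x₁ * x₂ := by rcases hsign with h | h <;> nlinarith
  have hinv (x : ℝ) : -β / (-β / x) = x := div_div_cancel₀ (neg_ne_zero.2 hβ.ne')
  have hest (x : ℝ) (hx : x ∈ Icc x₁ x₂) := div_abs_mul_sub_le hβ.le hx₁ hx₂ hsign hx
  set r := -β / x₁ with hr
  set s := -β / x₂ with hs
  have hrs : r < s := neg_div_lt_neg_div hβ h₁₂ hpos
  have hsign' : 0 < r ∨ s < 0 := hsign.symm.imp
    (fun h => div_pos_of_neg_of_neg (neg_lt_zero.2 hβ) (h₁₂.trans h))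
    (fun h => div_neg_of_neg_of_pos (neg_lt_zero.2 hβ) (h.trans h₁₂))
  have hIoo : Ioo x₁ x₂ = Ioo (-β / r) (-β / s) := by rw [hr, hs, hinv, hinv]
  rw [hIoo]
  by_cases hwide : r + 2 < s
  · exact Or.inl (Ioc_subset_image_Ubeta hP hβ hsign' hwide)
  obtain ⟨u, v, hu, huv, hv, hsub, hlen⟩ := exists_Ioo_subset_image_fract2 hrs (not_lt.1 hwide)
  refine Or.inr ⟨P * u, P * v, by nlinarith, by gcongr, by nlinarith,
    Ioo_mul_subset_image_Ubeta hP hβ hsign' hsub, ?_⟩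
  rcases hlen with hlen | ⟨k, hk, hlen⟩
  · have hx₁P : β / P ≤ β / |x₁| := div_le_div_of_nonneg_left hβ.le
      (abs_pos.2 (left_ne_zero_of_mul hpos.ne')) (abs_le.2 ⟨hx₁, by linarith⟩)
    calc min (3 / 2) (β / P) * (x₂ - x₁)
        ≤ β / |x₁| * (x₂ - x₁) := by gcongr; exact (min_le_right _ _).trans hx₁P
      _ ≤ P * (s - r) := hest x₁ ⟨le_rfl, h₁₂.le⟩
      _ = P * v - P * u := by rw [← hlen]; ring
  · -- the odd integer `m` where `fract2` jumps satisfies `|m| > β / P > 1`, so `|m| ≥ 3`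
    set m : ℝ := 2 * k + 1
    have hm0 : m ≠ 0 := by rcases hsign' with h | h <;> linarith [hk.1, hk.2]
    have hx : -β / m ∈ Ioo x₁ x₂ := hIoo ▸ mapsTo_neg_div_Ioo hβ hsign' hk
    have hxm : β / |-β / m| = |m| := by
      rw [abs_div, abs_neg, abs_of_pos hβ]
      field_simp
    have hm1 : 1 < |m| :=
      hxm ▸ (one_lt_div (abs_pos.2 (div_ne_zero (neg_ne_zero.2 hβ.ne') hm0))).2
        ((abs_le.2 ⟨by linarith [hx.1], by linarith [hx.2]⟩).trans_lt hPβ)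
    have hm3 := three_le_abs_two_mul_add_one hm1
    have hexp := hxm ▸ hest _ (Ioo_subset_Icc_self hx)
    calc min (3 / 2) (β / P) * (x₂ - x₁)
        ≤ 3 / 2 * (x₂ - x₁) := by gcongr; exact min_le_left _ _
      _ ≤ P * v - P * u := by nlinarith

theorem iterates_cover (p : ℕ) (hp : 0 < p) (β : ℝ) (hβ : (p : ℝ) < β)
    (a b : ℝ) (hab : a < b) (hJ : Set.Ioo a b ⊆ Set.Icc (-(p : ℝ)) p) :
    ∃ n₀ : ℕ, 0 < n₀ ∧ ∀ n ≥ n₀, Set.Ioo (-(p : ℝ)) p ⊆ (Ubeta p β)^[n] '' Set.Ioo a b := by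
  have hP : (0 : ℝ) < p := by exact_mod_cast hp
  have hinvariant : Ioo (-(p : ℝ)) p ⊆ Ubeta p β '' Ioo (-(p : ℝ)) p :=
    Ioo_subset_Ioc_self.trans (Ioc_subset_image_Ubeta_of_nonpos_of_nonneg hP (hP.trans hβ)
      (by linarith) (by linarith) hP.le)
  obtain ⟨ha, hb⟩ := (Icc_subset_Icc_iff hab.le).1 <|
    closure_Ioo hab.ne ▸ closure_minimal hJ isClosed_Icc
  obtain ⟨n₀, hn₀, hn₀_cover⟩ := exists_subset_iterate_image_of_expanding
    (ι := {q : ℝ × ℝ // -(p : ℝ) ≤ q.1 ∧ q.1 < q.2 ∧ q.2 ≤ p}) (I := fun q => Ioo q.1.1 q.1.2)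
    (len := fun q => q.1.2 - q.1.1) (M := 2 * p)
    (lt_min (by norm_num) ((one_lt_div hP).2 hβ)) (fun ⟨_, h₁, _, h₂⟩ => by linarith)
    (fun ⟨_, h₁, h₁₂, h₂⟩ => (Ioc_subset_image_Ubeta_or_exists_expanded hP hβ h₁ h₁₂ h₂).imp
      Ioo_subset_Ioc_self.trans
      fun ⟨y₁, y₂, hy₁, hy₁₂, hy₂, hsub, hlen⟩ => ⟨⟨(y₁, y₂), hy₁, hy₁₂, hy₂⟩, hsub, hlen⟩)
    ⟨(a, b), ha, hab, hb⟩ (sub_pos.2 hab)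
  exact ⟨n₀, hn₀, fun n hn => subset_iterate_image_of_le hinvariant hn₀_cover hn⟩
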